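/- Let d2, a2, h, q > 0 and x2 > 0. Define α1 = (a2 + √(a2² + 4·d2·q))/(2·d2), α2 = (a2 − √(a2² + 4·d2·q))/(2·d2), k1 = h·a2·(1 − exp(α2·x2)) / ( q·(d2·α1 − a2)·(exp(α1·x2) − exp(α2·x2)) ), and k2 = h·a2·(1 − exp(α1·x2)) / ( q·(d2·α2 − a2)·(exp(α2·x2) − exp(α1·x2)) ). Then the function w̄(x) = k1·exp(α1·x) + k2·exp(α2·x) + h/q satisfies d2·w̄''(x) − a2·w̄'(x) + h − q·w̄(x) = 0 for all x ∈ [0, x2], together with the boundary conditions d2·w̄'(0) − a2·w̄(0) = 0 and d2·w̄'(x2) − a2·w̄(x2) = 0. -/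

import Mathlib

lemma deriv_aux (a b c d e : ℝ) (x : ℝ) :
    deriv (fun x => a * Real.exp (b*x) + c * Real.exp (d*x) + e) x
      = a*b*Real.exp (b*x) + c*d*Real.exp (d*x) := by
  have h1 : HasDerivAt (fun x => a * Real.exp (b*x) + c * Real.exp (d*x) + e)
      (a*(Real.exp (b*x)*(b*1)) + c*(Real.exp (d*x)*(d*1))) x := by
    exact ((((hasDerivAt_id x).const_mul b).exp.const_mul a).add
      (((hasDerivAt_id x).const_mul d).exp.const_mul c)).add_const e
  rw [h1.deriv]; ring

/-- the explicit function w̄ solves the downstream toxicant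
boundary value problem on [0, x2]. -/
theorem downstream_explicit_solution
    (d2 a2 h q x2 : ℝ)
    (hd2 : 0 < d2) (ha2 : 0 < a2) (hh : 0 < h) (hq : 0 < q)
    (hx2 : 0 < x2) :
    let α1 : ℝ := (a2 + Real.sqrt (a2 ^ 2 + 4 * d2 * q)) / (2 * d2)
    let α2 : ℝ := (a2 - Real.sqrt (a2 ^ 2 + 4 * d2 * q)) / (2 * d2)
    let k1 : ℝ := h * a2 * (1 - Real.exp (α2 * x2)) /
      (q * (d2 * α1 - a2) * (Real.exp (α1 * x2) - Real.exp (α2 * x2)))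
    let k2 : ℝ := h * a2 * (1 - Real.exp (α1 * x2)) /
      (q * (d2 * α2 - a2) * (Real.exp (α2 * x2) - Real.exp (α1 * x2)))
    let w : ℝ → ℝ := fun x => k1 * Real.exp (α1 * x) + k2 * Real.exp (α2 * x) + h / q
    (∀ x ∈ Set.Icc (0 : ℝ) x2,
        d2 * deriv (deriv w) x - a2 * deriv w x + h - q * w x = 0) ∧
      d2 * deriv w 0 - a2 * w 0 = 0 ∧ d2 * deriv w x2 - a2 * w x2 = 0 := by
  intro α1 α2 k1 k2 w
  set s : ℝ := Real.sqrt (a2 ^ 2 + 4 * d2 * q) with hs_def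
  have hDpos : (0:ℝ) < a2 ^ 2 + 4 * d2 * q := by positivity
  have hs2 : s ^ 2 = a2 ^ 2 + 4 * d2 * q := Real.sq_sqrt hDpos.le
  have hspos : 0 < s := Real.sqrt_pos.mpr hDpos
  have hsa : a2 < s := by nlinarith
  -- root equations
  have hr1 : d2 * α1 ^ 2 - a2 * α1 - q = 0 := by
    show d2 * ((a2 + s) / (2 * d2)) ^ 2 - a2 * ((a2 + s) / (2 * d2)) - q = 0
    field_simp
    nlinarith [hs2]
  have hr2 : d2 * α2 ^ 2 - a2 * α2 - q = 0 := by
    show d2 * ((a2 - s) / (2 * d2)) ^ 2 - a2 * ((a2 - s) / (2 * d2)) - q = 0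
    field_simp
    nlinarith [hs2]
  -- key nonzero facts
  have hden1 : d2 * α1 - a2 ≠ 0 := by
    show d2 * ((a2 + s) / (2 * d2)) - a2 ≠ 0
    have : d2 * ((a2 + s) / (2 * d2)) - a2 = (s - a2) / 2 := by field_simp; ring
    rw [this]; exact ne_of_gt (by linarith)
  have hden2 : d2 * α2 - a2 ≠ 0 := by
    show d2 * ((a2 - s) / (2 * d2)) - a2 ≠ 0
    have : d2 * ((a2 - s) / (2 * d2)) - a2 = -((s + a2) / 2) := by field_simp; ring
    rw [this]
    have : 0 < (s + a2) / 2 := by positivity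
    linarith
  have hαlt : α2 < α1 := by
    show (a2 - s) / (2 * d2) < (a2 + s) / (2 * d2)
    exact (div_lt_div_iff_of_pos_right (by positivity)).mpr (by linarith)
  have hElt : Real.exp (α2 * x2) < Real.exp (α1 * x2) := by
    exact Real.exp_lt_exp.mpr (by nlinarith)
  have hE : Real.exp (α1 * x2) - Real.exp (α2 * x2) ≠ 0 := by linarith
  have hE' : Real.exp (α2 * x2) - Real.exp (α1 * x2) ≠ 0 := by
    intro hc; apply hE; linarith
  -- derivative computations
  have hw' : deriv w = fun x => k1*α1*Real.exp (α1*x) + k2*α2*Real.exp (α2*x) := by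
    funext x
    exact deriv_aux k1 α1 k2 α2 (h/q) x
  have hw'' : ∀ x, deriv (deriv w) x
      = k1*α1*α1*Real.exp (α1*x) + k2*α2*α2*Real.exp (α2*x) := by
    intro x
    rw [hw']
    have heq : (fun x => k1*α1*Real.exp (α1*x) + k2*α2*Real.exp (α2*x))
        = fun x => (k1*α1) * Real.exp (α1*x) + (k2*α2) * Real.exp (α2*x) + 0 := by
      funext y; ring
    rw [heq, deriv_aux]
  refine ⟨fun x _ => ?_, ?_, ?_⟩
  · rw [hw'', hw']
    show d2 * _ - a2 * (k1*α1*Real.exp (α1*x) + k2*α2*Real.exp (α2*x)) + h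
        - q * (k1 * Real.exp (α1 * x) + k2 * Real.exp (α2 * x) + h / q) = 0
    have hq' : q ≠ 0 := ne_of_gt hq
    have : d2 * (k1*α1*α1*Real.exp (α1*x) + k2*α2*α2*Real.exp (α2*x))
        - a2 * (k1*α1*Real.exp (α1*x) + k2*α2*Real.exp (α2*x)) + h
        - q * (k1 * Real.exp (α1 * x) + k2 * Real.exp (α2 * x) + h / q)
        = k1 * Real.exp (α1*x) * (d2 * α1^2 - a2 * α1 - q)
          + k2 * Real.exp (α2*x) * (d2 * α2^2 - a2 * α2 - q)
          + (h - q * (h/q)) := by ring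
    rw [this, hr1, hr2]
    field_simp
    ring
  · rw [hw']
    show d2 * (k1*α1*Real.exp (α1*0) + k2*α2*Real.exp (α2*0))
        - a2 * (k1 * Real.exp (α1 * 0) + k2 * Real.exp (α2 * 0) + h / q) = 0
    simp only [mul_zero, Real.exp_zero, mul_one]
    show d2 * (h * a2 * (1 - Real.exp (α2 * x2)) /
      (q * (d2 * α1 - a2) * (Real.exp (α1 * x2) - Real.exp (α2 * x2))) * α1
      + h * a2 * (1 - Real.exp (α1 * x2)) /
      (q * (d2 * α2 - a2) * (Real.exp (α2 * x2) - Real.exp (α1 * x2))) * α2)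
      - a2 * (h * a2 * (1 - Real.exp (α2 * x2)) /
      (q * (d2 * α1 - a2) * (Real.exp (α1 * x2) - Real.exp (α2 * x2)))
      + h * a2 * (1 - Real.exp (α1 * x2)) /
      (q * (d2 * α2 - a2) * (Real.exp (α2 * x2) - Real.exp (α1 * x2))) + h / q) = 0
    have hq' : q ≠ 0 := ne_of_gt hq
    have hE1 : Real.exp (x2 * α1) - Real.exp (α2 * x2) ≠ 0 := by rw [mul_comm x2]; exact hE
    have hE1' : Real.exp (α2 * x2) - Real.exp (x2 * α1) ≠ 0 := by rw [mul_comm x2]; exact hE'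
    field_simp
    ring
  · rw [hw']
    show d2 * (k1*α1*Real.exp (α1*x2) + k2*α2*Real.exp (α2*x2))
        - a2 * (k1 * Real.exp (α1 * x2) + k2 * Real.exp (α2 * x2) + h / q) = 0
    show d2 * (h * a2 * (1 - Real.exp (α2 * x2)) /
      (q * (d2 * α1 - a2) * (Real.exp (α1 * x2) - Real.exp (α2 * x2))) * α1 * Real.exp (α1*x2)
      + h * a2 * (1 - Real.exp (α1 * x2)) /
      (q * (d2 * α2 - a2) * (Real.exp (α2 * x2) - Real.exp (α1 * x2))) * α2 * Real.exp (α2*x2))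
      - a2 * (h * a2 * (1 - Real.exp (α2 * x2)) /
      (q * (d2 * α1 - a2) * (Real.exp (α1 * x2) - Real.exp (α2 * x2))) * Real.exp (α1*x2)
      + h * a2 * (1 - Real.exp (α1 * x2)) /
      (q * (d2 * α2 - a2) * (Real.exp (α2 * x2) - Real.exp (α1 * x2))) * Real.exp (α2*x2)
      + h / q) = 0
    have hq' : q ≠ 0 := ne_of_gt hq
    have hE1 : Real.exp (x2 * α1) - Real.exp (α2 * x2) ≠ 0 := by rw [mul_comm x2]; exact hE
    have hE1' : Real.exp (α2 * x2) - Real.exp (x2 * α1) ≠ 0 := by rw [mul_comm x2]; exact hE'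
    field_simp
    ring
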